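/- Cauchy's q-binomial theorem: for complex numbers a, q, z with |q| < 1 and |z| < 1, the series ∑_{k=0}^∞ ((a;q)_k / (q;q)_k) z^k converges and equals (az;q)_∞ / (z;q)_∞, where (x;q)_∞ = ∏_{j=0}^∞ (1 - x q^j). -/

import Mathlib

/-!
Write `F(w) = ∑ₖ cₖ wᵏ` with `cₖ = (a;q)ₖ/(q;q)ₖ`. The recurrence
`cₖ₊₁ (1 - q^(k+1)) = cₖ (1 - a qᵏ)`, compared coefficientwise, gives the functional equation
`(1 - w) F(w) = (1 - a w) F(q w)`. Iterating it, `(z;q)ₙ F(z) = (az;q)ₙ F(qⁿ z)`, and letting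
`n → ∞` (where `F(qⁿ z) → F(0) = 1` by dominated convergence) gives `(z;q)_∞ F(z) = (az;q)_∞`.
-/

/-- Finite q-shifted factorial: (x;q)_n = ∏_{i=0}^{n-1} (1 - x q^i). -/
noncomputable def qp (x q : ℂ) (n : ℕ) : ℂ := ∏ i ∈ Finset.range n, (1 - x * q ^ i)

/-- Infinite q-shifted factorial: (x;q)_∞ = ∏_{j=0}^∞ (1 - x q^j). -/
noncomputable def qpInf (x q : ℂ) : ℂ := ∏' j : ℕ, (1 - x * q ^ j)

/-- q-shifted factorial with integer index: (x;q)_k = (x;q)_∞ / (x q^k;q)_∞. -/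
noncomputable def qpZ (x q : ℂ) (k : ℤ) : ℂ := qpInf x q / qpInf (x * q ^ k) q

open Filter Topology

lemma qp_succ (x q : ℂ) (n : ℕ) : qp x q (n + 1) = qp x q n * (1 - x * q ^ n) :=
  Finset.prod_range_succ _ _

section QPochhammer

variable {x q : ℂ}

lemma norm_pow_mul_le (hq : ‖q‖ ≤ 1) (w : ℂ) (n : ℕ) : ‖q ^ n * w‖ ≤ ‖w‖ := by
  rw [norm_mul, norm_pow]
  exact mul_le_of_le_one_left (norm_nonneg w) (pow_le_one₀ (norm_nonneg q) hq)

lemma norm_pow_mul_lt_one (hq : ‖q‖ ≤ 1) {w : ℂ} (hw : ‖w‖ < 1) (n : ℕ) : ‖q ^ n * w‖ < 1 :=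
  (norm_pow_mul_le hq w n).trans_lt hw

lemma one_sub_mul_pow_ne_zero (hq : ‖q‖ ≤ 1) (hx : ‖x‖ < 1) (j : ℕ) : 1 - x * q ^ j ≠ 0 := by
  have h : ‖x * q ^ j‖ < 1 := by simpa only [mul_comm] using norm_pow_mul_lt_one hq hx j
  exact sub_ne_zero.2 fun h1 => by simp [← h1] at h

lemma one_sub_pow_succ_ne_zero (hq : ‖q‖ < 1) (k : ℕ) : 1 - q ^ (k + 1) ≠ 0 := by
  simpa only [← pow_succ'] using one_sub_mul_pow_ne_zero hq.le hq k

lemma qp_ne_zero (hq : ‖q‖ ≤ 1) (hx : ‖x‖ < 1) (n : ℕ) : qp x q n ≠ 0 :=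
  Finset.prod_ne_zero_iff.mpr fun j _ => one_sub_mul_pow_ne_zero hq hx j

lemma summable_norm_neg_mul_pow (x : ℂ) (hq : ‖q‖ < 1) :
    Summable fun j : ℕ => ‖-(x * q ^ j)‖ := by
  simpa only [norm_neg, norm_mul, norm_pow] using
    (summable_geometric_of_lt_one (norm_nonneg q) hq).mul_left ‖x‖

lemma hasProd_qpInf (x : ℂ) (hq : ‖q‖ < 1) : HasProd (fun j : ℕ => 1 - x * q ^ j) (qpInf x q) := by
  simpa only [qpInf, ← sub_eq_add_neg] using
    (multipliable_one_add_of_summable (summable_norm_neg_mul_pow x hq)).hasProd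

lemma tendsto_qp_qpInf (x : ℂ) (hq : ‖q‖ < 1) : Tendsto (qp x q) atTop (𝓝 (qpInf x q)) :=
  (hasProd_qpInf x hq).tendsto_prod_nat

lemma qpInf_ne_zero (hq : ‖q‖ < 1) (hx : ‖x‖ < 1) : qpInf x q ≠ 0 := by
  simpa only [qpInf, ← sub_eq_add_neg] using tprod_one_add_ne_zero_of_summable
    (fun j => by simpa only [← sub_eq_add_neg] using one_sub_mul_pow_ne_zero hq.le hx j)
    (summable_norm_neg_mul_pow x hq)

end QPochhammer

noncomputable def qBinomCoeff (a q : ℂ) (k : ℕ) : ℂ := qp a q k / qp q q k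

noncomputable def qBinomSeries (a q w : ℂ) : ℂ := ∑' k : ℕ, qBinomCoeff a q k * w ^ k

section QBinomial

variable {a q : ℂ}

@[simp]
lemma qBinomCoeff_zero : qBinomCoeff a q 0 = 1 := by
  simp [qBinomCoeff, qp]

lemma qBinomCoeff_succ_mul (hq : ‖q‖ < 1) (k : ℕ) :
    qBinomCoeff a q (k + 1) * (1 - q ^ (k + 1)) = qBinomCoeff a q k * (1 - a * q ^ k) := by
  have hk := qp_ne_zero hq.le hq k
  have hk' := one_sub_pow_succ_ne_zero hq k
  simp only [qBinomCoeff, qp_succ, ← pow_succ']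
  field_simp

lemma qBinomCoeff_succ (hq : ‖q‖ < 1) (k : ℕ) :
    qBinomCoeff a q (k + 1) = qBinomCoeff a q k * ((1 - a * q ^ k) / (1 - q ^ (k + 1))) := by
  rw [← mul_div_assoc, eq_div_iff (one_sub_pow_succ_ne_zero hq k), qBinomCoeff_succ_mul hq]

lemma tendsto_qBinomCoeff_ratio (hq : ‖q‖ < 1) :
    Tendsto (fun k : ℕ => (1 - a * q ^ k) / (1 - q ^ (k + 1))) atTop (𝓝 1) := by
  have hpow : Tendsto (q ^ ·) atTop (𝓝 0) := tendsto_pow_atTop_nhds_zero_of_norm_lt_one hq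
  simpa [Pi.div_def] using ((hpow.const_mul a).const_sub 1).div
    ((hpow.comp (tendsto_add_atTop_nat 1)).const_sub 1) (by simp)

lemma summable_norm_qBinomCoeff_mul_pow (hq : ‖q‖ < 1) {w : ℂ} (hw : ‖w‖ < 1) :
    Summable fun k : ℕ => ‖qBinomCoeff a q k * w ^ k‖ := by
  obtain ⟨r, hwr, hr1⟩ := exists_between hw
  refine summable_of_ratio_norm_eventually_le hr1 ?_
  have hratio : ∀ᶠ k : ℕ in atTop, ‖(1 - a * q ^ k) / (1 - q ^ (k + 1))‖ * ‖w‖ < r := by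
    refine Tendsto.eventually_lt_const hwr ?_
    simpa using (tendsto_qBinomCoeff_ratio hq).norm.mul_const ‖w‖
  filter_upwards [hratio] with k hk
  rw [norm_norm, norm_norm, qBinomCoeff_succ hq, pow_succ]
  calc ‖qBinomCoeff a q k * ((1 - a * q ^ k) / (1 - q ^ (k + 1))) * (w ^ k * w)‖
      = ‖(1 - a * q ^ k) / (1 - q ^ (k + 1))‖ * ‖w‖ * ‖qBinomCoeff a q k * w ^ k‖ := by
        simp only [norm_mul]
        ring
    _ ≤ r * ‖qBinomCoeff a q k * w ^ k‖ := by gcongr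

lemma summable_qBinomCoeff_mul_pow (hq : ‖q‖ < 1) {w : ℂ} (hw : ‖w‖ < 1) :
    Summable fun k : ℕ => qBinomCoeff a q k * w ^ k :=
  (summable_norm_qBinomCoeff_mul_pow hq hw).of_norm

lemma qBinomSeries_functional_eq (hq : ‖q‖ < 1) {w : ℂ} (hw : ‖w‖ < 1) :
    (1 - w) * qBinomSeries a q w = (1 - a * w) * qBinomSeries a q (q * w) := by
  have hqw : ‖q * w‖ < 1 := by simpa using norm_pow_mul_lt_one hq.le hw 1
  have hS : HasSum (fun k => qBinomCoeff a q k * w ^ k) (qBinomSeries a q w) :=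
    (summable_qBinomCoeff_mul_pow hq hw).hasSum
  have hT : HasSum (fun k => qBinomCoeff a q k * (q * w) ^ k) (qBinomSeries a q (q * w)) :=
    (summable_qBinomCoeff_mul_pow hq hqw).hasSum
  have hshift := ((hasSum_nat_add_iff' 1).2 hS).sub ((hasSum_nat_add_iff' 1).2 hT)
  have hrec : HasSum
      (fun k => qBinomCoeff a q (k + 1) * w ^ (k + 1) - qBinomCoeff a q (k + 1) * (q * w) ^ (k + 1))
      (w * qBinomSeries a q w - a * w * qBinomSeries a q (q * w)) := by
    refine ((hS.mul_left w).sub (hT.mul_left (a * w))).congr_fun fun k => ?_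
    linear_combination w ^ (k + 1) * qBinomCoeff_succ_mul (a := a) hq k
  have h := hshift.unique hrec
  simp only [Finset.range_one, Finset.sum_singleton, pow_zero, mul_one] at h
  linear_combination h

lemma qp_mul_qBinomSeries (hq : ‖q‖ < 1) {z : ℂ} (hz : ‖z‖ < 1) (n : ℕ) :
    qp z q n * qBinomSeries a q z = qp (a * z) q n * qBinomSeries a q (q ^ n * z) := by
  induction n with
  | zero => simp [qp]
  | succ n ih =>
    have h := qBinomSeries_functional_eq (a := a) hq (norm_pow_mul_lt_one hq.le hz n)
    rw [qp_succ, qp_succ, pow_succ', mul_assoc q]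
    linear_combination (1 - z * q ^ n) * ih + qp (a * z) q n * h

lemma tendsto_qBinomSeries_pow_mul (hq : ‖q‖ < 1) {z : ℂ} (hz : ‖z‖ < 1) :
    Tendsto (fun n : ℕ => qBinomSeries a q (q ^ n * z)) atTop (𝓝 1) := by
  have hlim : Tendsto (fun n : ℕ => q ^ n * z) atTop (𝓝 0) := by
    simpa using (tendsto_pow_atTop_nhds_zero_of_norm_lt_one hq).mul_const z
  have hbound (n k : ℕ) : ‖qBinomCoeff a q k * (q ^ n * z) ^ k‖ ≤ ‖qBinomCoeff a q k * z ^ k‖ := by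
    rw [norm_mul, norm_mul, norm_pow, norm_pow]
    gcongr
    exact norm_pow_mul_le hq.le z n
  have hzero : ∑' k : ℕ, qBinomCoeff a q k * (0 : ℂ) ^ k = 1 := by
    rw [tsum_eq_single 0 fun k hk => by simp [hk]]
    simp
  simpa only [qBinomSeries, hzero] using tendsto_tsum_of_dominated_convergence
    (summable_norm_qBinomCoeff_mul_pow hq hz) (fun k => (hlim.pow k).const_mul _) (.of_forall hbound)

end QBinomial

/-- Cauchy's q-binomial theorem. -/
theorem cauchy_q_binomial (a q z : ℂ) (hq : ‖q‖ < 1) (hz : ‖z‖ < 1) :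
    HasSum (fun k : ℕ => qp a q k / qp q q k * z ^ k)
      (qpInf (a * z) q / qpInf z q) := by
  have hF : qpInf z q * qBinomSeries a q z = qpInf (a * z) q := by
    have hlim := (tendsto_qp_qpInf (a * z) hq).mul (tendsto_qBinomSeries_pow_mul (a := a) hq hz)
    simp_rw [← qp_mul_qBinomSeries hq hz, mul_one] at hlim
    exact tendsto_nhds_unique ((tendsto_qp_qpInf z hq).mul_const _) hlim
  rw [← hF, mul_div_cancel_left₀ _ (qpInf_ne_zero hq hz)]
  exact (summable_qBinomCoeff_mul_pow hq hz).hasSum
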